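/- arXiv:2101.00452 — 4 statements merged into one kernel-verified Lean document; each statement's English description precedes it below -/
import Mathlib

section
/- Let γ>1, A₀>0, B₀>0, κ₁>0, κ₂ ≠ 0. There exists a unique r^♯ ∈ (r̃, r₁) (with r̃ = |κ₂|/√(2B₀), provided the incoming data at r₁ satisfies M₁₀ ≠ 1) such that: for every r ∈ (r^♯, r₁) the equation F_r(ρ)=0 has exactly two positive roots ρ⁻(r) < ρ_*(r) < ρ⁺(r); for r = r^♯ it has exactly one positive root ρ_*(r^♯); and for r ∈ (0, r^♯) it has no nonnegative root. -/
/-!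
For fixed `r`, `F_r(ρ) = c ρ ^ (γ + 1) - b ρ ^ 2 + d` with `b = B₀ - κ₂² / (2 r²)` and
`d = κ₁² / (2 r²) > 0`. When `b > 0`, i.e. `r > r̃`, the function decreases on `[0, ρ_*(r)]` and
increases on `[ρ_*(r), ∞)`, so it has two, one or no nonnegative roots according to the sign of its
minimum `m(r) = F_r(ρ_*(r))`. As `r` grows, `b` grows and `d` shrinks, so `m` is strictly
decreasing on `(r̃, ∞)`. Since `ρ_*(r̃) = 0` we get `m(r̃) = d(r̃) > 0`, while `m(r₁) < 0` because
`F_{r₁}` vanishes at `ρ₀ ≠ ρ_*(r₁)`. Hence `m` has exactly one zero `r^♯`. For `r ≤ r̃` we have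
`b ≤ 0`, so `F_r > 0` on `[0, ∞)`.
-/

open Set

noncomputable def profile (γ c b d ρ : ℝ) : ℝ := c * ρ ^ (γ + 1) - b * ρ ^ 2 + d

noncomputable def profileCrit (γ c b : ℝ) : ℝ := (2 * b / (c * (γ + 1))) ^ (1 / (γ - 1))

section Profile

variable {γ c b d : ℝ}

theorem profileCrit_pos (hγ : -1 < γ) (hc : 0 < c) (hb : 0 < b) : 0 < profileCrit γ c b := by
  unfold profileCrit
  have : 0 < γ + 1 := by linarith
  positivity

theorem profileCrit_nonneg (hγ : -1 ≤ γ) (hc : 0 ≤ c) (hb : 0 ≤ b) : 0 ≤ profileCrit γ c b := by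
  unfold profileCrit
  have : 0 ≤ γ + 1 := by linarith
  positivity

theorem profileCrit_zero (hγ : γ ≠ 1) : profileCrit γ c 0 = 0 := by
  rw [profileCrit, mul_zero, zero_div, Real.zero_rpow (one_div_ne_zero (sub_ne_zero.2 hγ))]

theorem continuous_profileCrit (hγ : 1 ≤ γ) : Continuous fun b => profileCrit γ c b :=
  (Real.continuous_rpow_const (one_div_nonneg.2 (sub_nonneg.2 hγ))).comp
    (continuous_const.mul continuous_id |>.div_const _)

theorem mul_profileCrit_rpow (hγ : 1 < γ) (hc : 0 < c) (hb : 0 ≤ b) :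
    c * (γ + 1) * profileCrit γ c b ^ (γ - 1) = 2 * b := by
  have : 0 < γ + 1 := by linarith
  rw [profileCrit, one_div, Real.rpow_inv_rpow (by positivity) (by linarith)]
  field_simp

theorem continuous_profile (hγ : -1 ≤ γ) : Continuous (profile γ c b d) := by
  have := Real.continuous_rpow_const (q := γ + 1) (by linarith)
  unfold profile
  fun_prop

theorem profile_zero (hγ : γ ≠ -1) : profile γ c b d 0 = d := by
  simp [profile, Real.zero_rpow (show γ + 1 ≠ 0 by contrapose! hγ; linarith)]

theorem hasDerivAt_profile {x : ℝ} (hx : 0 < x) :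
    HasDerivAt (profile γ c b d) (x * (c * (γ + 1) * x ^ (γ - 1) - 2 * b)) x := by
  refine ((((Real.hasDerivAt_rpow_const (p := γ + 1) (Or.inl hx.ne')).const_mul c).sub
    ((hasDerivAt_pow 2 x).const_mul b)).add_const d).congr_deriv ?_
  rw [add_sub_cancel_right, Real.rpow_sub_one hx.ne']
  field_simp
  ring

theorem strictAntiOn_profile (hγ : 1 < γ) (hc : 0 < c) (hb : 0 ≤ b) :
    StrictAntiOn (profile γ c b d) (Icc 0 (profileCrit γ c b)) := by
  refine strictAntiOn_of_deriv_neg (convex_Icc _ _) (continuous_profile (by linarith)).continuousOn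
    fun x hx => ?_
  rw [interior_Icc] at hx
  rw [(hasDerivAt_profile hx.1).deriv, ← mul_profileCrit_rpow hγ hc hb]
  have : x ^ (γ - 1) < profileCrit γ c b ^ (γ - 1) :=
    Real.rpow_lt_rpow hx.1.le hx.2 (by linarith)
  have : 0 < γ + 1 := by linarith
  exact mul_neg_of_pos_of_neg hx.1 (sub_neg.2 (by gcongr))

theorem strictMonoOn_profile (hγ : 1 < γ) (hc : 0 < c) (hb : 0 ≤ b) :
    StrictMonoOn (profile γ c b d) (Ici (profileCrit γ c b)) := by
  refine strictMonoOn_of_deriv_pos (convex_Ici _) (continuous_profile (by linarith)).continuousOn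
    fun x hx => ?_
  rw [interior_Ici] at hx
  have hs : 0 ≤ profileCrit γ c b := profileCrit_nonneg (by linarith) hc.le hb
  have hx0 : 0 < x := hs.trans_lt hx
  rw [(hasDerivAt_profile hx0).deriv, ← mul_profileCrit_rpow hγ hc hb]
  have : profileCrit γ c b ^ (γ - 1) < x ^ (γ - 1) := Real.rpow_lt_rpow hs hx (by linarith)
  have : 0 < γ + 1 := by linarith
  exact mul_pos hx0 (sub_pos.2 (by gcongr))

theorem profile_profileCrit_lt (hγ : 1 < γ) (hc : 0 < c) (hb : 0 ≤ b) {ρ : ℝ} (hρ : 0 ≤ ρ)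
    (hne : ρ ≠ profileCrit γ c b) : profile γ c b d (profileCrit γ c b) < profile γ c b d ρ := by
  have hs : 0 ≤ profileCrit γ c b := profileCrit_nonneg (by linarith) hc.le hb
  rcases hne.lt_or_gt with h | h
  · exact strictAntiOn_profile hγ hc hb ⟨hρ, h.le⟩ ⟨hs, le_rfl⟩ h
  · exact strictMonoOn_profile hγ hc hb self_mem_Ici h.le h

theorem profile_profileCrit_le (hγ : 1 < γ) (hc : 0 < c) (hb : 0 ≤ b) {ρ : ℝ} (hρ : 0 ≤ ρ) :
    profile γ c b d (profileCrit γ c b) ≤ profile γ c b d ρ := by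
  rcases eq_or_ne ρ (profileCrit γ c b) with rfl | hne
  · exact le_rfl
  · exact (profile_profileCrit_lt hγ hc hb hρ hne).le

theorem setOf_profile_eq_zero (hγ : 1 < γ) (hc : 0 < c) (hb : 0 ≤ b)
    (h : profile γ c b d (profileCrit γ c b) = 0) :
    {ρ | 0 ≤ ρ ∧ profile γ c b d ρ = 0} = {profileCrit γ c b} := by
  ext ρ
  refine ⟨fun ⟨hρ, hρ0⟩ => by_contra fun hne => ?_, ?_⟩
  · exact (profile_profileCrit_lt hγ hc hb hρ hne).ne (h.trans hρ0.symm)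
  · rintro rfl
    exact ⟨profileCrit_nonneg (by linarith) hc.le hb, h⟩

theorem profile_pos_of_nonpos (hc : 0 ≤ c) (hb : b ≤ 0) (hd : 0 < d) {ρ : ℝ} (hρ : 0 ≤ ρ) :
    0 < profile γ c b d ρ := by
  unfold profile
  nlinarith [mul_nonneg hc (Real.rpow_nonneg hρ (γ + 1)),
    mul_nonneg (neg_nonneg.2 hb) (sq_nonneg ρ)]

theorem exists_profile_pos_gt_profileCrit (hγ : 1 < γ) (hc : 0 < c) (hb : 0 < b) (hd : 0 ≤ d) :
    ∃ y > profileCrit γ c b, 0 < profile γ c b d y := by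
  -- `y ^ (γ - 1) = 2 b / c` makes the two leading terms of the profile combine to `b y ^ 2`
  obtain ⟨y, hy, hy_pow⟩ : ∃ y : ℝ, 0 < y ∧ y ^ (γ - 1) = 2 * b / c :=
    ⟨(2 * b / c) ^ (1 / (γ - 1)), by positivity,
      by rw [one_div, Real.rpow_inv_rpow (by positivity) (by linarith)]⟩
  have hs : 0 < profileCrit γ c b := profileCrit_pos (by linarith) hc hb
  refine ⟨y, (Real.rpow_lt_rpow_iff hs.le hy.le (show 0 < γ - 1 by linarith)).1 ?_, ?_⟩
  · have := mul_profileCrit_rpow hγ hc hb.le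
    rw [hy_pow, lt_div_iff₀ hc]
    nlinarith [mul_pos hc (Real.rpow_pos_of_pos hs (γ - 1))]
  · have : y ^ (γ + 1) = y ^ (γ - 1) * y ^ 2 := by
      rw [← Real.rpow_natCast, ← Real.rpow_add hy]
      congr 1
      push_cast
      ring
    rw [profile, this, hy_pow]
    field_simp
    nlinarith [mul_pos hb (pow_pos hy 2)]

theorem exists_profile_roots (hγ : 1 < γ) (hc : 0 < c) (hb : 0 < b) (hd : 0 < d)
    (hneg : profile γ c b d (profileCrit γ c b) < 0) :
    ∃ ρm ρp, ρm < profileCrit γ c b ∧ profileCrit γ c b < ρp ∧ 0 < ρm ∧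
      {ρ | 0 < ρ ∧ profile γ c b d ρ = 0} = {ρm, ρp} := by
  set s := profileCrit γ c b
  have hcont : Continuous (profile γ c b d) := continuous_profile (by linarith)
  obtain ⟨ρm, hρm, hρm0⟩ := intermediate_value_Ioo' (profileCrit_pos (by linarith) hc hb).le
    hcont.continuousOn ⟨hneg, by rwa [profile_zero (γ := γ) (by linarith)]⟩
  obtain ⟨y, hsy, hy⟩ := exists_profile_pos_gt_profileCrit hγ hc hb hd.le
  obtain ⟨ρp, hρp, hρp0⟩ := intermediate_value_Ioo hsy.le hcont.continuousOn ⟨hneg, hy⟩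
  refine ⟨ρm, ρp, hρm.2, hρp.1, hρm.1, Set.ext fun ρ => ⟨fun ⟨hρ, hρ0⟩ => ?_, ?_⟩⟩
  · rcases le_or_gt ρ s with h | h
    · exact Or.inl <| (strictAntiOn_profile hγ hc hb.le).injOn ⟨hρ.le, h⟩
        ⟨hρm.1.le, hρm.2.le⟩ (hρ0.trans hρm0.symm)
    · exact Or.inr <| (strictMonoOn_profile hγ hc hb.le).injOn h.le hρp.1.le
        (hρ0.trans hρp0.symm)
  · rintro (rfl | rfl)
    exacts [⟨hρm.1, hρm0⟩, ⟨hρm.1.trans (hρm.2.trans hρp.1), hρp0⟩]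

end Profile

noncomputable def criticalRadius (B₀ κ₂ : ℝ) : ℝ := |κ₂| / √(2 * B₀)

noncomputable def radialCoeff (B₀ κ₂ r : ℝ) : ℝ := B₀ - κ₂ ^ 2 / (2 * r ^ 2)

-- `radialProfile γ c B₀ κ₁ κ₂ r` is the paper's `F_r` for `c = γ A₀ / (γ - 1)`, and
-- `profileCrit γ c (radialCoeff B₀ κ₂ r)` is its `ρ_*(r)`.
noncomputable def radialProfile (γ c B₀ κ₁ κ₂ r : ℝ) : ℝ → ℝ :=
  profile γ c (radialCoeff B₀ κ₂ r) (κ₁ ^ 2 / (2 * r ^ 2))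

noncomputable def radialMin (γ c B₀ κ₁ κ₂ r : ℝ) : ℝ :=
  radialProfile γ c B₀ κ₁ κ₂ r (profileCrit γ c (radialCoeff B₀ κ₂ r))

section Radial

variable {γ c B₀ κ₁ κ₂ : ℝ}

theorem criticalRadius_nonneg (B₀ κ₂ : ℝ) : 0 ≤ criticalRadius B₀ κ₂ := by
  unfold criticalRadius
  positivity

theorem criticalRadius_pos (hB : 0 < B₀) (hκ₂ : κ₂ ≠ 0) : 0 < criticalRadius B₀ κ₂ := by
  unfold criticalRadius
  positivity

theorem radialCoeff_pos_iff (hB : 0 < B₀) {r : ℝ} (hr : 0 < r) :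
    0 < radialCoeff B₀ κ₂ r ↔ criticalRadius B₀ κ₂ < r := by
  rw [criticalRadius, ← Real.sqrt_sq_eq_abs, ← Real.sqrt_div' _ (by positivity),
    Real.sqrt_lt' hr, radialCoeff, sub_pos, div_lt_iff₀ (by positivity),
    div_lt_iff₀ (by positivity)]
  constructor <;> intro h <;> linarith

theorem radialCoeff_pos_of_lt (hB : 0 < B₀) {r : ℝ} (hr : criticalRadius B₀ κ₂ < r) :
    0 < radialCoeff B₀ κ₂ r :=
  (radialCoeff_pos_iff hB ((criticalRadius_nonneg B₀ κ₂).trans_lt hr)).2 hr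

theorem radialCoeff_criticalRadius (hB : 0 < B₀) (hκ₂ : κ₂ ≠ 0) :
    radialCoeff B₀ κ₂ (criticalRadius B₀ κ₂) = 0 := by
  rw [radialCoeff, criticalRadius, div_pow, sq_abs, Real.sq_sqrt (by positivity)]
  field_simp
  ring

theorem monotoneOn_radialCoeff : MonotoneOn (radialCoeff B₀ κ₂) (Ioi 0) := by
  intro r hr r' _ hrr'
  have : 0 < r := hr
  unfold radialCoeff
  gcongr

theorem radialProfile_lt_radialProfile (hκ₁ : κ₁ ≠ 0) {r r' : ℝ} (hr : 0 < r) (hrr' : r < r')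
    (ρ : ℝ) : radialProfile γ c B₀ κ₁ κ₂ r' ρ < radialProfile γ c B₀ κ₁ κ₂ r ρ := by
  have hb : radialCoeff B₀ κ₂ r ≤ radialCoeff B₀ κ₂ r' :=
    monotoneOn_radialCoeff hr (hr.trans hrr') hrr'.le
  have hd : κ₁ ^ 2 / (2 * r' ^ 2) < κ₁ ^ 2 / (2 * r ^ 2) := by gcongr
  unfold radialProfile profile
  nlinarith [mul_le_mul_of_nonneg_right hb (sq_nonneg ρ)]

theorem strictAntiOn_radialMin (hγ : 1 < γ) (hc : 0 < c) (hB : 0 < B₀) (hκ₁ : κ₁ ≠ 0) :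
    StrictAntiOn (radialMin γ c B₀ κ₁ κ₂) (Ioi (criticalRadius B₀ κ₂)) := by
  intro r hr r' hr' hrr'
  have hr0 : 0 < r := (criticalRadius_nonneg B₀ κ₂).trans_lt hr
  calc radialMin γ c B₀ κ₁ κ₂ r'
      ≤ radialProfile γ c B₀ κ₁ κ₂ r' (profileCrit γ c (radialCoeff B₀ κ₂ r)) :=
        profile_profileCrit_le hγ hc (radialCoeff_pos_of_lt hB hr').le
          (profileCrit_nonneg (by linarith) hc.le (radialCoeff_pos_of_lt hB hr).le)
    _ < radialMin γ c B₀ κ₁ κ₂ r := radialProfile_lt_radialProfile hκ₁ hr0 hrr' _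

theorem continuousOn_radialMin (hγ : 1 < γ) :
    ContinuousOn (radialMin γ c B₀ κ₁ κ₂) (Ioi 0) := by
  intro r hr
  have : 2 * r ^ 2 ≠ 0 := by have : 0 < r := hr; positivity
  have hb : ContinuousAt (radialCoeff B₀ κ₂) r := by
    unfold radialCoeff; fun_prop (disch := assumption)
  have hd : ContinuousAt (fun r => κ₁ ^ 2 / (2 * r ^ 2)) r := by fun_prop (disch := assumption)
  have hs : ContinuousAt (fun r => profileCrit γ c (radialCoeff B₀ κ₂ r)) r :=
    (continuous_profileCrit hγ.le).continuousAt.comp hb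
  exact ((continuousAt_const.mul (hs.rpow_const (Or.inr (by linarith)))).sub
    (hb.mul (hs.pow 2))).add hd |>.continuousWithinAt

theorem radialMin_criticalRadius_pos (hγ : 1 < γ) (hB : 0 < B₀) (hκ₁ : κ₁ ≠ 0) (hκ₂ : κ₂ ≠ 0) :
    0 < radialMin γ c B₀ κ₁ κ₂ (criticalRadius B₀ κ₂) := by
  have := criticalRadius_pos hB hκ₂
  rw [radialMin, radialProfile, radialCoeff_criticalRadius hB hκ₂, profileCrit_zero hγ.ne',
    profile_zero (by linarith)]
  positivity

theorem exists_radialMin_eq_zero (hγ : 1 < γ) (hB : 0 < B₀) (hκ₁ : κ₁ ≠ 0) (hκ₂ : κ₂ ≠ 0)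
    {r₁ : ℝ} (hr₁ : criticalRadius B₀ κ₂ < r₁) (hneg : radialMin γ c B₀ κ₁ κ₂ r₁ < 0) :
    ∃ rs ∈ Ioo (criticalRadius B₀ κ₂) r₁, radialMin γ c B₀ κ₁ κ₂ rs = 0 :=
  intermediate_value_Ioo' hr₁.le
    ((continuousOn_radialMin hγ).mono ((Icc_subset_Ioi_iff hr₁.le).2 (criticalRadius_pos hB hκ₂)))
    ⟨hneg, radialMin_criticalRadius_pos hγ hB hκ₁ hκ₂⟩

theorem radialProfile_pos_of_lt (hγ : 1 < γ) (hc : 0 < c) (hB : 0 < B₀) (hκ₁ : κ₁ ≠ 0)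
    {rs r ρ : ℝ} (hrs : criticalRadius B₀ κ₂ < rs) (hmin : radialMin γ c B₀ κ₁ κ₂ rs = 0)
    (hr : 0 < r) (hrrs : r < rs) (hρ : 0 ≤ ρ) : 0 < radialProfile γ c B₀ κ₁ κ₂ r ρ := by
  by_cases h : criticalRadius B₀ κ₂ < r
  · calc 0 = radialMin γ c B₀ κ₁ κ₂ rs := hmin.symm
      _ < radialMin γ c B₀ κ₁ κ₂ r := strictAntiOn_radialMin hγ hc hB hκ₁ h hrs hrrs
      _ ≤ radialProfile γ c B₀ κ₁ κ₂ r ρ :=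
        profile_profileCrit_le hγ hc (radialCoeff_pos_of_lt hB h).le hρ
  · exact profile_pos_of_nonpos hc.le (not_lt.1 ((radialCoeff_pos_iff hB hr).not.2 h))
      (by positivity) hρ

end Radial

/-- Lemma 2.5: there exists a unique `r^♯ ∈ (r̃, r₁)` such that `F_r(ρ) = 0`
has exactly two positive roots `ρ⁻(r) < ρ_*(r) < ρ⁺(r)` for `r ∈ (r^♯, r₁)`, exactly one
nonnegative root `ρ_*(r^♯)` for `r = r^♯`, and no nonnegative root for `r ∈ (0, r^♯)`.
The incoming data at `r₁` is compatible (`F_{r₁}(ρ₀) = 0`) with radial Mach number ≠ 1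
(`ρ₀ ≠ ρ_*(r₁)`). -/
theorem stmt4 (γ A₀ B₀ κ₁ κ₂ r₁ ρ₀ : ℝ) (hγ : 1 < γ) (hA : 0 < A₀) (hB : 0 < B₀)
    (hκ₁ : 0 < κ₁) (hκ₂ : κ₂ ≠ 0)
    (K ρStar : ℝ → ℝ)
    (hK : ∀ r : ℝ, K r = 2 * (γ - 1) / (γ + 1) * B₀ - (γ - 1) / (γ + 1) * κ₂ ^ 2 / r ^ 2)
    (hρStar : ∀ r : ℝ, ρStar r = (K r / (γ * A₀)) ^ ((1 : ℝ) / (γ - 1)))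
    (F : ℝ → ℝ → ℝ)
    (hF : ∀ r ρ : ℝ, F r ρ =
      γ / (γ - 1) * A₀ * ρ ^ (γ + 1) - (B₀ - κ₂ ^ 2 / (2 * r ^ 2)) * ρ ^ 2
        + κ₁ ^ 2 / (2 * r ^ 2))
    (hr₁ : |κ₂| / Real.sqrt (2 * B₀) < r₁)
    (hρ₀pos : 0 < ρ₀) (hcompat : F r₁ ρ₀ = 0) (hMach : ρ₀ ≠ ρStar r₁) :
    ∃! rs : ℝ, (|κ₂| / Real.sqrt (2 * B₀) < rs ∧ rs < r₁) ∧
      ((∀ r : ℝ, rs < r → r < r₁ →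
          ∃ ρm ρp : ℝ, ρm < ρStar r ∧ ρStar r < ρp ∧ 0 < ρm ∧
            {ρ : ℝ | 0 < ρ ∧ F r ρ = 0} = {ρm, ρp}) ∧
        {ρ : ℝ | 0 ≤ ρ ∧ F rs ρ = 0} = {ρStar rs} ∧
        ∀ r : ℝ, 0 < r → r < rs → ∀ ρ : ℝ, 0 ≤ ρ → F r ρ ≠ 0) := by
  have hγ₁ : 0 < γ - 1 := sub_pos.2 hγ
  set c := γ / (γ - 1) * A₀ with hc_def
  have hc : 0 < c := by positivity
  obtain rfl : F = radialProfile γ c B₀ κ₁ κ₂ := funext₂ hF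
  obtain rfl : ρStar = fun r => profileCrit γ c (radialCoeff B₀ κ₂ r) := by
    funext r
    rw [hρStar, hK, profileCrit, radialCoeff, hc_def]
    congr 1
    field_simp
  have hanti := strictAntiOn_radialMin hγ hc hB (κ₂ := κ₂) hκ₁.ne'
  have hmin₁ : radialMin γ c B₀ κ₁ κ₂ r₁ < 0 :=
    (profile_profileCrit_lt hγ hc (radialCoeff_pos_of_lt hB hr₁).le hρ₀pos.le hMach).trans_eq
      hcompat
  obtain ⟨rs, hrs, hmin_rs⟩ := exists_radialMin_eq_zero hγ hB hκ₁.ne' hκ₂ hr₁ hmin₁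
  refine ⟨rs, ⟨hrs, fun r hrsr hrr₁ => ?_, ?_, fun r hr hrrs ρ hρ => ?_⟩, ?_⟩
  · have hr : criticalRadius B₀ κ₂ < r := hrs.1.trans hrsr
    have : 0 < r := (criticalRadius_nonneg B₀ κ₂).trans_lt hr
    exact exists_profile_roots hγ hc (radialCoeff_pos_of_lt hB hr) (by positivity)
      (hmin_rs ▸ hanti hrs.1 hr hrsr)
  · exact setOf_profile_eq_zero hγ hc (radialCoeff_pos_of_lt hB hrs.1).le hmin_rs
  · exact (radialProfile_pos_of_lt hγ hc hB hκ₁.ne' hrs.1 hmin_rs hr hrrs hρ).ne'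
  · rintro rs' ⟨hrs', -, hset, -⟩
    have hmem : profileCrit γ c (radialCoeff B₀ κ₂ rs') ∈
        {ρ | 0 ≤ ρ ∧ radialProfile γ c B₀ κ₁ κ₂ rs' ρ = 0} := hset ▸ mem_singleton _
    exact hanti.injOn hrs'.1 hrs.1 (hmem.2.trans hmin_rs.symm)
end

section
/- Let γ>1 and define T₁(x) = (x^γ/(γ+1))·(−(γ−1) + 4γ/((γ+1)x − (γ−1))) for x ∈ ((γ−1)/(γ+1), (γ+1)/(γ−1)). Then T₁ is strictly decreasing on this interval, T₁(1) = 1, and T₁(x) > 1 if and only if x < 1. -/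
/-!
The derivative factors as
`T₁'(x) = -γ(γ² - 1) x^(γ-1) (x - 1)² / ((γ + 1)x - (γ - 1))²`,
which is negative on the whole half-line `x > (γ - 1)/(γ + 1)` except at the double zero `x = 1`.
Hence `T₁` is strictly decreasing there, and as `T₁(1) = 1`, `T₁(x) > 1` exactly when `x < 1`.
-/

open Set

theorem strictAntiOn_of_hasDerivAt_neg_of_ne {D : Set ℝ} (hD : Convex ℝ D) {f f' : ℝ → ℝ} {c : ℝ}
    (hc : c ∈ D) (hf : ContinuousOn f D) (hf' : ∀ x ∈ interior D, HasDerivAt f (f' x) x)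
    (hf'₀ : ∀ x ∈ interior D, x ≠ c → f' x < 0) : StrictAntiOn f D := by
  have deriv_neg : ∀ x ∈ interior D, x ≠ c → deriv f x < 0 := fun x hx hxc =>
    (hf' x hx).deriv ▸ hf'₀ x hx hxc
  have left : StrictAntiOn f (D ∩ Iic c) := by
    refine strictAntiOn_of_deriv_neg (hD.inter (convex_Iic c)) (hf.mono inter_subset_left) ?_
    rw [interior_inter, interior_Iic]
    exact fun x hx => deriv_neg x hx.1 hx.2.ne
  have right : StrictAntiOn f (D ∩ Ici c) := by
    refine strictAntiOn_of_deriv_neg (hD.inter (convex_Ici c)) (hf.mono inter_subset_left) ?_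
    rw [interior_inter, interior_Ici]
    exact fun x hx => deriv_neg x hx.1 hx.2.ne'
  have hsplit : D = D ∩ Iic c ∪ D ∩ Ici c := by
    rw [← inter_union_distrib_left, Iic_union_Ici, inter_univ]
  rw [hsplit]
  exact left.union right ⟨⟨hc, mem_Iic.2 le_rfl⟩, fun _ hx => hx.2⟩
    ⟨⟨hc, mem_Ici.2 le_rfl⟩, fun _ hx => hx.2⟩

noncomputable def entropyRatio (γ x : ℝ) : ℝ :=
  x ^ γ / (γ + 1) * (-(γ - 1) + 4 * γ / ((γ + 1) * x - (γ - 1)))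

theorem hasDerivAt_entropyRatio {γ x : ℝ} (hγ : γ + 1 ≠ 0) (hx : 0 < x)
    (hden : (γ + 1) * x - (γ - 1) ≠ 0) :
    HasDerivAt (entropyRatio γ)
      (-(γ * (γ ^ 2 - 1) * x ^ (γ - 1) * (x - 1) ^ 2 / ((γ + 1) * x - (γ - 1)) ^ 2)) x := by
  have hlin : HasDerivAt (fun x : ℝ => (γ + 1) * x - (γ - 1)) (γ + 1) x := by
    simpa using ((hasDerivAt_id x).const_mul (γ + 1)).sub_const (γ - 1)
  have hfactor : HasDerivAt (fun x : ℝ => -(γ - 1) + 4 * γ / ((γ + 1) * x - (γ - 1)))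
      (4 * γ * (-(γ + 1) / ((γ + 1) * x - (γ - 1)) ^ 2)) x := by
    simpa [div_eq_mul_inv] using ((hlin.inv hden).const_mul (4 * γ)).const_add (-(γ - 1))
  have hpow := (Real.hasDerivAt_rpow_const (p := γ) (Or.inl hx.ne')).div_const (γ + 1)
  refine (hpow.mul hfactor).congr_deriv ?_
  have hsplit : x ^ γ = x ^ (γ - 1) * x := by
    rw [← Real.rpow_add_one hx.ne', sub_add_cancel]
  rw [hsplit]
  field_simp
  ring

theorem entropyRatio_one {γ : ℝ} (hγ : γ + 1 ≠ 0) : entropyRatio γ 1 = 1 := by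
  rw [entropyRatio, Real.one_rpow, show (γ + 1) * 1 - (γ - 1) = 2 by ring]
  field_simp
  ring

theorem strictAntiOn_entropyRatio {γ : ℝ} (hγ : 1 < γ) :
    StrictAntiOn (entropyRatio γ) (Ioi ((γ - 1) / (γ + 1))) := by
  have hγ₁ : 0 < γ + 1 := by linarith
  have hden : ∀ x ∈ Ioi ((γ - 1) / (γ + 1)), 0 < (γ + 1) * x - (γ - 1) := fun x hx => by
    have := (div_lt_iff₀' hγ₁).mp hx
    linarith
  have hpos : ∀ x ∈ Ioi ((γ - 1) / (γ + 1)), 0 < x := fun x hx =>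
    (div_nonneg (by linarith) hγ₁.le).trans_lt hx
  have hderiv : ∀ x ∈ Ioi ((γ - 1) / (γ + 1)), HasDerivAt (entropyRatio γ)
      (-(γ * (γ ^ 2 - 1) * x ^ (γ - 1) * (x - 1) ^ 2 / ((γ + 1) * x - (γ - 1)) ^ 2)) x :=
    fun x hx => hasDerivAt_entropyRatio hγ₁.ne' (hpos x hx) (hden x hx).ne'
  refine strictAntiOn_of_hasDerivAt_neg_of_ne (convex_Ioi _)
    ((div_lt_one hγ₁).mpr (by linarith)) (fun x hx => (hderiv x hx).continuousAt.continuousWithinAt)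
    (by simpa only [interior_Ioi] using hderiv) ?_
  rw [interior_Ioi]
  intro x hx hx1
  have hsq : 0 < γ ^ 2 - 1 := by nlinarith
  have hnum : 0 < γ * (γ ^ 2 - 1) * x ^ (γ - 1) * (x - 1) ^ 2 :=
    mul_pos (mul_pos (mul_pos (by linarith) hsq) (Real.rpow_pos_of_pos (hpos x hx) _))
      (sq_pos_of_ne_zero (sub_ne_zero.mpr hx1))
  exact neg_neg_of_pos (div_pos hnum (pow_pos (hden x hx) 2))

/-- `T₁(x) = (x^γ/(γ+1))(−(γ−1) + 4γ/((γ+1)x − (γ−1)))` is strictly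
decreasing on `((γ−1)/(γ+1), (γ+1)/(γ−1))`, `T₁(1) = 1`, and on this interval
`T₁(x) > 1 ↔ x < 1`. -/
theorem stmt6 (γ : ℝ) (hγ : 1 < γ) (T₁ : ℝ → ℝ)
    (hT₁ : ∀ x : ℝ, T₁ x = x ^ γ / (γ + 1) * (-(γ - 1) + 4 * γ / ((γ + 1) * x - (γ - 1)))) :
    StrictAntiOn T₁ (Set.Ioo ((γ - 1) / (γ + 1)) ((γ + 1) / (γ - 1))) ∧
    T₁ 1 = 1 ∧
    ∀ x ∈ Set.Ioo ((γ - 1) / (γ + 1)) ((γ + 1) / (γ - 1)), (1 < T₁ x ↔ x < 1) := by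
  obtain rfl : T₁ = entropyRatio γ := funext hT₁
  have hanti : StrictAntiOn (entropyRatio γ) (Ioo ((γ - 1) / (γ + 1)) ((γ + 1) / (γ - 1))) :=
    (strictAntiOn_entropyRatio hγ).mono Ioo_subset_Ioi_self
  have hone := entropyRatio_one (γ := γ) (by linarith)
  have hmem : (1 : ℝ) ∈ Ioo ((γ - 1) / (γ + 1)) ((γ + 1) / (γ - 1)) :=
    ⟨(div_lt_one (by linarith)).mpr (by linarith), (one_lt_div (by linarith)).mpr (by linarith)⟩
  refine ⟨hanti, hone, fun x hx => ?_⟩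
  simpa only [hone] using hanti.lt_iff_gt hmem hx
end

section
/- Suppose M₁²(r) := (M₁(r))² is a C¹ function on [r₀, r₁) satisfying the ODE (M₁²)'(r) = M₁²(r)/(r(M₁²(r) − 1)) · (2 + (γ−1)M₁²(r) + (γ+1)M₂²(r)) with M₂²(r) ≥ 0, γ > 1, and M₁²(r₀) > 1. Then M₁²(r) > 1 and (M₁²)'(r) > 0 for all r ∈ [r₀, r₁), and moreover M₁²(r) ≥ M₁²(r₀)·(r/r₀)^{γ−1}. -/
/-!
At a point where `M₁² > 1` the right-hand side of the ODE is at least `(γ - 1) M₁² / r > 0`.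
Hence `M₁²` can never come back down to its initial value (a barrier argument), so it stays
above `1`; and `M₁² r^{-(γ-1)}` is nondecreasing, which is the growth bound.
-/

open Set

/-- The right-hand side of the ODE, with `m = M₁²` and `b = M₂²`. -/
noncomputable def machRHS (γ r m b : ℝ) : ℝ := m / (r * (m - 1)) * (2 + (γ - 1) * m + (γ + 1) * b)

lemma le_machRHS {γ r m b : ℝ} (hγ : -1 ≤ γ) (hr : 0 < r) (hm : 1 < m) (hb : 0 ≤ b) :
    (γ - 1) * m / r ≤ machRHS γ r m b := by
  have hm₁ : 0 < m - 1 := sub_pos.2 hm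
  have hfactor : (γ - 1) * (m - 1) ≤ 2 + (γ - 1) * m + (γ + 1) * b := by
    nlinarith [mul_nonneg (by linarith : (0 : ℝ) ≤ γ + 1) hb]
  calc (γ - 1) * m / r = m / (r * (m - 1)) * ((γ - 1) * (m - 1)) := by
        field_simp
    _ ≤ machRHS γ r m b := by
        unfold machRHS
        gcongr

lemma machRHS_pos {γ r m b : ℝ} (hγ : 1 < γ) (hr : 0 < r) (hm : 1 < m) (hb : 0 ≤ b) :
    0 < machRHS γ r m b :=
  lt_of_lt_of_le (by have := sub_pos.2 hγ; positivity) (le_machRHS (by linarith) hr hm hb)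

lemma left_le_of_deriv_pos_of_eq_left {f f' : ℝ → ℝ} {a b : ℝ}
    (hf : ∀ x ∈ Icc a b, HasDerivAt f (f' x) x) (hpos : ∀ x ∈ Ico a b, f x = f a → 0 < f' x) :
    ∀ x ∈ Icc a b, f a ≤ f x := by
  intro x hx
  have := image_le_of_deriv_right_lt_deriv_boundary (f := fun x => -f x) (f' := fun x => -f' x)
    (B := fun _ => -f a) (B' := 0)
    (fun x hx => (hf x hx).continuousAt.neg.continuousWithinAt)
    (fun x hx => (hf x (Ico_subset_Icc_self hx)).neg.hasDerivWithinAt) le_rfl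
    (fun _ => hasDerivAt_const _ _)
    (fun x hx hfx => neg_lt_zero.2 (hpos x hx (neg_inj.1 hfx))) hx
  simpa using this

lemma mul_div_rpow_le_of_le_deriv {f f' : ℝ → ℝ} {a b p : ℝ} (ha : 0 < a) (hab : a ≤ b)
    (hf : ∀ x ∈ Icc a b, HasDerivAt f (f' x) x) (hf' : ∀ x ∈ Ioo a b, p * f x / x ≤ f' x) :
    f a * (b / a) ^ p ≤ f b := by
  have hderiv : ∀ x ∈ Icc a b, HasDerivAt (fun x => f x * x ^ (-p))
      (f' x * x ^ (-p) + f x * (-p * x ^ (-p - 1))) x := fun x hx =>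
    (hf x hx).mul (Real.hasDerivAt_rpow_const (Or.inl (ha.trans_le hx.1).ne'))
  have hmono : MonotoneOn (fun x => f x * x ^ (-p)) (Icc a b) := by
    refine monotoneOn_of_hasDerivWithinAt_nonneg (convex_Icc a b)
      (fun x hx => (hderiv x hx).continuousAt.continuousWithinAt)
      (fun x hx => (hderiv x (interior_subset hx)).hasDerivWithinAt) fun x hx => ?_
    rw [interior_Icc] at hx
    have hx₀ : 0 < x := ha.trans hx.1
    have : f' x * x ^ (-p) + f x * (-p * x ^ (-p - 1)) = x ^ (-p) * (f' x - p * f x / x) := by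
      rw [Real.rpow_sub_one hx₀.ne']
      ring
    rw [this]
    exact mul_nonneg (by positivity) (sub_nonneg.2 (hf' x hx))
  have hb : 0 < b := ha.trans_le hab
  have := hmono (left_mem_Icc.2 hab) (right_mem_Icc.2 hab) hab
  simp only [Real.rpow_neg ha.le, Real.rpow_neg hb.le] at this
  rw [Real.div_rpow hb.le ha.le]
  have hbp : 0 < b ^ p := by positivity
  calc f a * (b ^ p / a ^ p) = f a * (a ^ p)⁻¹ * b ^ p := by ring
    _ ≤ f b * (b ^ p)⁻¹ * b ^ p := by gcongr
    _ = f b := by field_simp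

theorem stmt12_general (γ r₀ r₁ : ℝ) (hγ : 1 < γ) (hr₀ : 0 < r₀)
    (M1sq M2sq : ℝ → ℝ) (hM2sq : ∀ r : ℝ, 0 ≤ M2sq r)
    (hODE : ∀ r ∈ Set.Ico r₀ r₁,
      HasDerivAt M1sq
        (M1sq r / (r * (M1sq r - 1)) * (2 + (γ - 1) * M1sq r + (γ + 1) * M2sq r)) r)
    (hinit : 1 < M1sq r₀) :
    ∀ r ∈ Set.Ico r₀ r₁,
      1 < M1sq r ∧ 0 < deriv M1sq r ∧ M1sq r₀ * (r / r₀) ^ (γ - 1) ≤ M1sq r := by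
  intro r hr
  have hderiv : ∀ x ∈ Icc r₀ r, HasDerivAt M1sq (machRHS γ x (M1sq x) (M2sq x)) x :=
    fun x hx => hODE x ⟨hx.1, hx.2.trans_lt hr.2⟩
  have hsuper : ∀ x ∈ Icc r₀ r, 1 < M1sq x := by
    have hmono := left_le_of_deriv_pos_of_eq_left hderiv fun x hx hx₀ =>
      machRHS_pos hγ (hr₀.trans_le hx.1) (hx₀ ▸ hinit) (hM2sq x)
    exact fun x hx => hinit.trans_le (hmono x hx)
  refine ⟨hsuper r ⟨hr.1, le_rfl⟩, ?_, ?_⟩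
  · rw [(hODE r hr).deriv]
    exact machRHS_pos hγ (hr₀.trans_le hr.1) (hsuper r ⟨hr.1, le_rfl⟩) (hM2sq r)
  · refine mul_div_rpow_le_of_le_deriv hr₀ hr.1 hderiv fun x hx => ?_
    exact le_machRHS (by linarith) (hr₀.trans hx.1) (hsuper x (Ioo_subset_Icc_self hx)) (hM2sq x)

/-- If `M₁²` solves `(M₁²)' = M₁²/(r(M₁²−1))·(2+(γ−1)M₁²+(γ+1)M₂²)` on
`[r₀, r₁)` with `M₂² ≥ 0` and `M₁²(r₀) > 1`, then `M₁² > 1` and `(M₁²)' > 0` on `[r₀, r₁)`,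
and `M₁²(r) ≥ M₁²(r₀)(r/r₀)^{γ−1}`. -/
theorem stmt12 (γ r₀ r₁ : ℝ) (hγ : 1 < γ) (hr₀ : 0 < r₀) (hr₀₁ : r₀ < r₁)
    (M1sq M2sq : ℝ → ℝ) (hM2sq : ∀ r : ℝ, 0 ≤ M2sq r)
    (hODE : ∀ r ∈ Set.Ico r₀ r₁,
      HasDerivAt M1sq
        (M1sq r / (r * (M1sq r - 1)) * (2 + (γ - 1) * M1sq r + (γ + 1) * M2sq r)) r)
    (hinit : 1 < M1sq r₀) :
    ∀ r ∈ Set.Ico r₀ r₁,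
      1 < M1sq r ∧ 0 < deriv M1sq r ∧ M1sq r₀ * (r / r₀) ^ (γ - 1) ≤ M1sq r :=
  stmt12_general γ r₀ r₁ hγ hr₀ M1sq M2sq hM2sq hODE hinit
end

section
/- Suppose (M₁², |M|²) are C¹ functions on [r₀, r₁) satisfying (M₁²)' = M₁²/(r(M₁² − 1))·(2 + (γ−1)M₁² + (γ+1)(|M|² − M₁²)) and (|M|²)' = |M|²/(r(M₁² − 1))·(2 + (γ−1)|M|²), with γ > 1, 0 ≤ M₁²(r₀) ≤ |M|²(r₀) < 1. Then M₁²(r) < 1 and |M|²(r) < 1 for all r ∈ [r₀, r₁), and |M|²(r) ≤ r₀²|M|²(r₀)/r². -/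
/-!
While `M₁² < 1` the singular factor `1 / (r (M₁² − 1))` is continuous, so `M₁²`, `|M|² − M₁²`
satisfy scalar linear equations `x' = h x` and keep their sign, while `|M|²` is nonincreasing.
Hence the closed region `0 ≤ M₁² ≤ |M|² ≤ |M|²(r₀)` is forward invariant, and it keeps `M₁²`
away from the singularity `M₁² = 1`. Inside it `(r² |M|²)' = r |M|² (2 M₁² + (γ − 1)|M|²) / (M₁² − 1)`
is nonpositive, which gives the decay.
-/

open Set Filter Topology

theorem nonneg_of_hasDerivAt_eq_mul_self {x h : ℝ → ℝ} {a b : ℝ}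
    (hx : ∀ s ∈ Icc a b, HasDerivAt x (h s * x s) s) (hh : ContinuousOn h (Icc a b))
    (ha : 0 ≤ x a) : ∀ s ∈ Icc a b, 0 ≤ x s := by
  intro s hs
  by_contra! hneg
  have hxc : ContinuousOn x (Icc a b) := fun u hu => (hx u hu).continuousAt.continuousWithinAt
  obtain ⟨K, hK⟩ := isCompact_Icc.exists_bound_of_continuousOn hh
  obtain ⟨t, ht, hxt⟩ := intermediate_value_Icc' hs.1
    (hxc.mono (Icc_subset_Icc_right hs.2)) ⟨hneg.le, ha⟩
  have hts : Icc t s ⊆ Icc a b := Icc_subset_Icc ht.1 hs.2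
  have hzero := eq_zero_of_abs_deriv_le_mul_abs_self_of_eq_zero_right (K := K) (hxc.mono hts)
    (fun u hu => (hx u (hts (Ico_subset_Icc_self hu))).hasDerivWithinAt) hxt
    (fun u hu => by
      rw [norm_mul]
      exact mul_le_mul_of_nonneg_right (hK u (hts (Ico_subset_Icc_self hu))) (norm_nonneg _))
    s ⟨ht.2, le_rfl⟩
  exact hneg.ne hzero

theorem antitoneOn_Icc_of_hasDerivAt_nonpos {f f' : ℝ → ℝ} {a b : ℝ}
    (hf : ∀ s ∈ Icc a b, HasDerivAt f (f' s) s) (hf' : ∀ s ∈ Icc a b, f' s ≤ 0) :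
    AntitoneOn f (Icc a b) := by
  refine antitoneOn_of_hasDerivWithinAt_nonpos (f' := f') (convex_Icc a b)
    (fun s hs => (hf s hs).continuousAt.continuousWithinAt) (fun s hs => ?_) (fun s hs => ?_)
  all_goals rw [interior_Icc] at hs
  · exact (hf s (Ioo_subset_Icc_self hs)).hasDerivWithinAt
  · exact hf' s (Ioo_subset_Icc_self hs)

-- Right-hand sides of the equations for `M₁²` and `|M|²`; the arguments `m₁`, `m` stand for
-- `M₁²`, `|M|²`.
noncomputable def radialMachRHS (γ r m₁ m : ℝ) : ℝ :=
  m₁ / (r * (m₁ - 1)) * (2 + (γ - 1) * m₁ + (γ + 1) * (m - m₁))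

noncomputable def totalMachRHS (γ r m₁ m : ℝ) : ℝ :=
  m / (r * (m₁ - 1)) * (2 + (γ - 1) * m)

theorem radialMachRHS_eq_mul (γ r m₁ m : ℝ) :
    radialMachRHS γ r m₁ m = (2 + (γ - 1) * m₁ + (γ + 1) * (m - m₁)) / (r * (m₁ - 1)) * m₁ := by
  unfold radialMachRHS
  ring

theorem totalMachRHS_sub_radialMachRHS (γ r m₁ m : ℝ) :
    totalMachRHS γ r m₁ m - radialMachRHS γ r m₁ m =
      (2 + (γ - 1) * (m + m₁) - (γ + 1) * m₁) / (r * (m₁ - 1)) * (m - m₁) := by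
  unfold totalMachRHS radialMachRHS
  ring

theorem totalMachRHS_nonpos {γ r m₁ m : ℝ} (hγ : 1 ≤ γ) (hr : 0 < r) (hm₁ : m₁ < 1)
    (hm : 0 ≤ m) : totalMachRHS γ r m₁ m ≤ 0 :=
  mul_nonpos_of_nonpos_of_nonneg
    (div_nonpos_of_nonneg_of_nonpos hm (mul_nonpos_of_nonneg_of_nonpos hr.le (by linarith)))
    (by nlinarith)

theorem two_mul_add_sq_mul_totalMachRHS_nonpos {γ r m₁ m : ℝ} (hγ : 1 ≤ γ) (hr : 0 < r)
    (hm₁ : m₁ < 1) (hm₁₀ : 0 ≤ m₁) (hm : 0 ≤ m) :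
    2 * r * m + r ^ 2 * totalMachRHS γ r m₁ m ≤ 0 := by
  have hden : m₁ - 1 ≠ 0 := by linarith
  have heq : 2 * r * m + r ^ 2 * totalMachRHS γ r m₁ m =
      r * m * (2 * m₁ + (γ - 1) * m) / (m₁ - 1) := by
    unfold totalMachRHS
    field_simp
    ring
  rw [heq]
  exact div_nonpos_of_nonneg_of_nonpos (by positivity) (by linarith)

section MachODE

variable {γ : ℝ} {m₁ m : ℝ → ℝ}

theorem mach_invariant_of_subsonic {a b : ℝ} (hγ : 1 ≤ γ) (ha : 0 < a)
    (h₁ : ∀ r ∈ Icc a b, HasDerivAt m₁ (radialMachRHS γ r (m₁ r) (m r)) r)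
    (h₂ : ∀ r ∈ Icc a b, HasDerivAt m (totalMachRHS γ r (m₁ r) (m r)) r)
    (hsub : ∀ r ∈ Icc a b, m₁ r < 1) (h₀ : 0 ≤ m₁ a) (h₀₁ : m₁ a ≤ m a) :
    ∀ r ∈ Icc a b, 0 ≤ m₁ r ∧ m₁ r ≤ m r ∧ m r ≤ m a := by
  have hc₁ : ContinuousOn m₁ (Icc a b) := fun r hr => (h₁ r hr).continuousAt.continuousWithinAt
  have hc₂ : ContinuousOn m (Icc a b) := fun r hr => (h₂ r hr).continuousAt.continuousWithinAt
  have hden : ∀ r ∈ Icc a b, r * (m₁ r - 1) ≠ 0 := fun r hr =>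
    mul_ne_zero (ha.trans_le hr.1).ne' (by linarith [hsub r hr])
  have hm₁ : ∀ r ∈ Icc a b, 0 ≤ m₁ r :=
    nonneg_of_hasDerivAt_eq_mul_self
      (h := fun r => (2 + (γ - 1) * m₁ r + (γ + 1) * (m r - m₁ r)) / (r * (m₁ r - 1)))
      (fun r hr => by simpa only [radialMachRHS_eq_mul] using h₁ r hr)
      (ContinuousOn.div (by fun_prop) (by fun_prop) hden) h₀
  have hgap : ∀ r ∈ Icc a b, 0 ≤ m r - m₁ r :=
    nonneg_of_hasDerivAt_eq_mul_self
      (h := fun r => (2 + (γ - 1) * (m r + m₁ r) - (γ + 1) * m₁ r) / (r * (m₁ r - 1)))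
      (fun r hr => by rw [← totalMachRHS_sub_radialMachRHS]; exact (h₂ r hr).sub (h₁ r hr))
      (ContinuousOn.div (by fun_prop) (by fun_prop) hden) (sub_nonneg.2 h₀₁)
  have hanti : AntitoneOn m (Icc a b) :=
    antitoneOn_Icc_of_hasDerivAt_nonpos h₂ fun r hr =>
      totalMachRHS_nonpos hγ (ha.trans_le hr.1) (hsub r hr) (by linarith [hm₁ r hr, hgap r hr])
  intro r hr
  exact ⟨hm₁ r hr, sub_nonneg.1 (hgap r hr), hanti ⟨le_rfl, hr.1.trans hr.2⟩ hr hr.1⟩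

theorem mach_invariant {r₀ r₁ : ℝ} (hγ : 1 ≤ γ) (hr₀ : 0 < r₀)
    (h₁ : ∀ r ∈ Ico r₀ r₁, HasDerivAt m₁ (radialMachRHS γ r (m₁ r) (m r)) r)
    (h₂ : ∀ r ∈ Ico r₀ r₁, HasDerivAt m (totalMachRHS γ r (m₁ r) (m r)) r)
    (h₀ : 0 ≤ m₁ r₀) (h₀₁ : m₁ r₀ ≤ m r₀) (h₁₁ : m r₀ < 1) :
    ∀ r ∈ Ico r₀ r₁, 0 ≤ m₁ r ∧ m₁ r ≤ m r ∧ m r ≤ m r₀ := by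
  intro b hb
  set S : Set ℝ := {r | 0 ≤ m₁ r ∧ m₁ r ≤ m r ∧ m r ≤ m r₀}
  have hclosed : IsClosed (S ∩ Icc r₀ b) := by
    have hc : ContinuousOn (fun r => (m₁ r, m r)) (Icc r₀ b) := fun r hr =>
      have hr' : r ∈ Ico r₀ r₁ := ⟨hr.1, hr.2.trans_lt hb.2⟩
      ((h₁ r hr').continuousAt.prodMk (h₂ r hr').continuousAt).continuousWithinAt
    rw [inter_comm]
    exact hc.preimage_isClosed_of_isClosed isClosed_Icc
      ((isClosed_le continuous_const continuous_fst).inter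
        ((isClosed_le continuous_fst continuous_snd).inter
          (isClosed_le continuous_snd continuous_const)))
  have hstep : ∀ x ∈ S ∩ Ico r₀ b, S ∈ 𝓝[>] x := by
    rintro x ⟨hxS, hx⟩
    have hx' : x ∈ Ico r₀ r₁ := ⟨hx.1, hx.2.trans hb.2⟩
    have hnear : ∀ᶠ y in 𝓝[≥] x, m₁ y < 1 ∧ y < r₁ :=
      nhdsWithin_le_nhds (((h₁ x hx').continuousAt.eventually_lt_const
        (by linarith [hxS.2.1, hxS.2.2])).and (eventually_lt_nhds hx'.2))
    obtain ⟨u, hxu, hu⟩ := mem_nhdsGE_iff_exists_Icc_subset.1 hnear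
    have hsub : Icc x u ⊆ Ico r₀ r₁ := fun y hy => ⟨hx.1.trans hy.1, (hu hy).2⟩
    refine mem_of_superset (Icc_mem_nhdsGT hxu) fun y hy => ?_
    obtain ⟨hy₀, hy₀₁, hy₁⟩ := mach_invariant_of_subsonic hγ (hr₀.trans_le hx.1)
      (fun r hr => h₁ r (hsub hr)) (fun r hr => h₂ r (hsub hr)) (fun r hr => (hu hr).1)
      hxS.1 hxS.2.1 y hy
    exact ⟨hy₀, hy₀₁, hy₁.trans hxS.2.2⟩
  exact hclosed.Icc_subset_of_forall_mem_nhdsWithin ⟨h₀, h₀₁, le_rfl⟩ hstep ⟨hb.1, le_rfl⟩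

theorem antitoneOn_sq_mul_of_subsonic {a b : ℝ} (hγ : 1 ≤ γ) (ha : 0 < a)
    (h₂ : ∀ r ∈ Icc a b, HasDerivAt m (totalMachRHS γ r (m₁ r) (m r)) r)
    (hm₁ : ∀ r ∈ Icc a b, 0 ≤ m₁ r ∧ m₁ r < 1) (hm : ∀ r ∈ Icc a b, 0 ≤ m r) :
    AntitoneOn (fun r => r ^ 2 * m r) (Icc a b) :=
  antitoneOn_Icc_of_hasDerivAt_nonpos
    (f' := fun r => 2 * r * m r + r ^ 2 * totalMachRHS γ r (m₁ r) (m r))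
    (fun r hr => ((hasDerivAt_pow 2 r).mul (h₂ r hr)).congr_deriv (by norm_num))
    (fun r hr => two_mul_add_sq_mul_totalMachRHS_nonpos hγ (ha.trans_le hr.1)
      (hm₁ r hr).2 (hm₁ r hr).1 (hm r hr))

end MachODE

theorem stmt13_general (γ r₀ r₁ : ℝ) (hγ : 1 < γ) (hr₀ : 0 < r₀)
    (M1sq Msq : ℝ → ℝ)
    (hODE1 : ∀ r ∈ Set.Ico r₀ r₁,
      HasDerivAt M1sq
        (M1sq r / (r * (M1sq r - 1)) *
          (2 + (γ - 1) * M1sq r + (γ + 1) * (Msq r - M1sq r))) r)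
    (hODE2 : ∀ r ∈ Set.Ico r₀ r₁,
      HasDerivAt Msq (Msq r / (r * (M1sq r - 1)) * (2 + (γ - 1) * Msq r)) r)
    (hinit0 : 0 ≤ M1sq r₀) (hinit1 : M1sq r₀ ≤ Msq r₀) (hinit2 : Msq r₀ < 1) :
    ∀ r ∈ Set.Ico r₀ r₁,
      M1sq r < 1 ∧ Msq r < 1 ∧ Msq r ≤ r₀ ^ 2 * Msq r₀ / r ^ 2 := by
  have hinv := mach_invariant hγ.le hr₀ hODE1 hODE2 hinit0 hinit1 hinit2
  intro r hr
  obtain ⟨-, hM₁M, hMM₀⟩ := hinv r hr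
  have hsub : Icc r₀ r ⊆ Ico r₀ r₁ := fun s hs => ⟨hs.1, hs.2.trans_lt hr.2⟩
  have hdecay : r ^ 2 * Msq r ≤ r₀ ^ 2 * Msq r₀ :=
    antitoneOn_sq_mul_of_subsonic hγ.le hr₀ (fun s hs => hODE2 s (hsub hs))
      (fun s hs => have h := hinv s (hsub hs); ⟨h.1, by linarith [h.2.1, h.2.2]⟩)
      (fun s hs => have h := hinv s (hsub hs); h.1.trans h.2.1)
      ⟨le_rfl, hr.1⟩ ⟨hr.1, le_rfl⟩ hr.1
  refine ⟨by linarith, by linarith, ?_⟩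
  rw [le_div_iff₀ (pow_pos (hr₀.trans_le hr.1) 2)]
  linarith

/-- If `(M₁², |M|²)` solve
`(M₁²)' = M₁²/(r(M₁²−1))·(2+(γ−1)M₁²+(γ+1)(|M|²−M₁²))` and
`(|M|²)' = |M|²/(r(M₁²−1))·(2+(γ−1)|M|²)` on `[r₀, r₁)` with
`0 ≤ M₁²(r₀) ≤ |M|²(r₀) < 1`, then `M₁² < 1` and `|M|² < 1` on `[r₀, r₁)` and
`|M|²(r) ≤ r₀²|M|²(r₀)/r²`. -/
theorem stmt13 (γ r₀ r₁ : ℝ) (hγ : 1 < γ) (hr₀ : 0 < r₀) (hr₀₁ : r₀ < r₁)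
    (M1sq Msq : ℝ → ℝ)
    (hODE1 : ∀ r ∈ Set.Ico r₀ r₁,
      HasDerivAt M1sq
        (M1sq r / (r * (M1sq r - 1)) *
          (2 + (γ - 1) * M1sq r + (γ + 1) * (Msq r - M1sq r))) r)
    (hODE2 : ∀ r ∈ Set.Ico r₀ r₁,
      HasDerivAt Msq (Msq r / (r * (M1sq r - 1)) * (2 + (γ - 1) * Msq r)) r)
    (hinit0 : 0 ≤ M1sq r₀) (hinit1 : M1sq r₀ ≤ Msq r₀) (hinit2 : Msq r₀ < 1) :
    ∀ r ∈ Set.Ico r₀ r₁,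
      M1sq r < 1 ∧ Msq r < 1 ∧ Msq r ≤ r₀ ^ 2 * Msq r₀ / r ^ 2 :=
  stmt13_general γ r₀ r₁ hγ hr₀ M1sq Msq hODE1 hODE2 hinit0 hinit1 hinit2
end
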